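/- arXiv:2107.14547 — 2 statements merged into one kernel-verified Lean document; each statement's English description precedes it below -/
import Mathlib

section
/- Let Z be a Banach ordered *-space (a normed ordered *-space whose increasing *-norm topology is complete), let H be a normed VH-space over Z (i.e., a VE-space over Z which is complete in the norm ‖x‖_H := ‖[x,x]‖^{1/2}), and let K be a normed VE-space over Z. Then every adjointable linear operator T : H → K is bounded: there exists C ≥ 0 such that ‖Tx‖_K ≤ C ‖x‖_H for all x ∈ H. -/
open scoped ComplexConjugate Topology

/-- The data of an ordered `*`-space structure on a complex vector space `Z`:
a conjugate-linear involution and a strict convex cone of selfadjoint elements. -/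
structure OrderedStarData (Z : Type*) [AddCommGroup Z] [Module ℂ Z] where
  star : Z → Z
  star_add : ∀ x y : Z, star (x + y) = star x + star y
  star_smul : ∀ (c : ℂ) (x : Z), star (c • x) = (starRingEnd ℂ) c • star x
  star_star : ∀ x : Z, star (star x) = x
  cone : Set Z
  cone_zero : (0 : Z) ∈ cone
  cone_add : ∀ x ∈ cone, ∀ y ∈ cone, x + y ∈ cone
  cone_smul : ∀ r : ℝ, 0 ≤ r → ∀ x ∈ cone, (r : ℂ) • x ∈ cone
  cone_strict : ∀ x ∈ cone, -x ∈ cone → x = 0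
  cone_star : ∀ x ∈ cone, star x = x

namespace OrderedStarData

variable {Z : Type*} [AddCommGroup Z] [Module ℂ Z]

/-- A seminorm is increasing when `0 ≤ x ≤ y` implies `p x ≤ p y`. -/
def Increasing (D : OrderedStarData Z) (p : Seminorm ℂ Z) : Prop :=
  ∀ x y : Z, x ∈ D.cone → y - x ∈ D.cone → p x ≤ p y

/-- A `*`-seminorm: `p (z*) = p z`. -/
def StarSeminorm (D : OrderedStarData Z) (p : Seminorm ℂ Z) : Prop :=
  ∀ z : Z, p (D.star z) = p z

end OrderedStarData

/-- A topologically ordered `*`-space: an ordered `*`-space with a Hausdorff locally convex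
topology generated by a family of increasing seminorms, continuous involution and closed cone. -/
structure TopOrderedStarSpace (Z : Type*) [AddCommGroup Z] [Module ℂ Z]
    [TopologicalSpace Z] extends OrderedStarData Z where
  t2 : T2Space Z
  star_continuous : Continuous star
  cone_closed : IsClosed cone
  seminorms_generate : ∃ (ι : Type) (hι : Nonempty ι) (q : ι → Seminorm ℂ Z),
      (∀ i, ∀ x y : Z, x ∈ cone → y - x ∈ cone → q i x ≤ q i y) ∧
      (letI := hι; WithSeminorms q)

namespace TopOrderedStarSpace

variable {Z : Type*} [AddCommGroup Z] [Module ℂ Z] [TopologicalSpace Z]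

/-- Membership in `S_*(Z)`, the set of continuous increasing `*`-seminorms. -/
def MemSStar (D : TopOrderedStarSpace Z) (p : Seminorm ℂ Z) : Prop :=
  Continuous ⇑p ∧ D.toOrderedStarData.Increasing p ∧ D.toOrderedStarData.StarSeminorm p

end TopOrderedStarSpace

/-- The topology of `Z` is generated by the family of seminorms `S`. -/
def GeneratesTopology {Z : Type*} [AddCommGroup Z] [Module ℂ Z] [TopologicalSpace Z]
    (S : Set (Seminorm ℂ Z)) : Prop :=
  ∃ h : Nonempty ↥S, letI := h; WithSeminorms (fun p : ↥S => (p : Seminorm ℂ Z))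

/-- A `Z`-valued gramian (vector valued inner product) on `E`, making `E` a VE-space over `Z`. -/
structure Gramian {Z : Type*} [AddCommGroup Z] [Module ℂ Z] (D : OrderedStarData Z)
    (E : Type*) [AddCommGroup E] [Module ℂ E] where
  inner : E → E → Z
  inner_self_mem : ∀ x : E, inner x x ∈ D.cone
  inner_self_eq_zero : ∀ x : E, inner x x = 0 → x = 0
  inner_herm : ∀ x y : E, inner x y = D.star (inner y x)
  inner_add_right : ∀ x y₁ y₂ : E, inner x (y₁ + y₂) = inner x y₁ + inner x y₂
  inner_smul_right : ∀ (a : ℂ) (x y : E), inner x (a • y) = a • inner x y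

namespace Gramian

variable {Z : Type*} [AddCommGroup Z] [Module ℂ Z] {D : OrderedStarData Z}
  {E : Type*} [AddCommGroup E] [Module ℂ E]
  {F : Type*} [AddCommGroup F] [Module ℂ F]

/-- The seminorm `p̃ x = p ([x,x])^{1/2}` induced on a VE-space by a seminorm on `Z`. -/
noncomputable def tilde (B : Gramian D E) (p : Seminorm ℂ Z) (x : E) : ℝ :=
  Real.sqrt (p (B.inner x x))

/-- `S` is an adjoint of `T` : `[Tx, y] = [x, Sy]`. -/
def IsAdjoint (BE : Gramian D E) (BF : Gramian D F) (T : E →ₗ[ℂ] F) (S : F →ₗ[ℂ] E) : Prop :=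
  ∀ (x : E) (y : F), BF.inner (T x) y = BE.inner x (S y)

/-- `T` is adjointable. -/
def Adjointable (BE : Gramian D E) (BF : Gramian D F) (T : E →ₗ[ℂ] F) : Prop :=
  ∃ S : F →ₗ[ℂ] E, BE.IsAdjoint BF T S

/-- `T` is bounded for the seminorm `p` : `p̃ (Tx) ≤ C p̃ x`. -/
def BoundedFor (BE : Gramian D E) (BF : Gramian D F) (T : E →ₗ[ℂ] F) (p : Seminorm ℂ Z) : Prop :=
  ∃ C : ℝ, 0 ≤ C ∧ ∀ x : E, BF.tilde p (T x) ≤ C * BE.tilde p x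

/-- The operator seminorm `p̄ T`, the infimum of the admissible bounds. -/
noncomputable def opSeminorm (BE : Gramian D E) (BF : Gramian D F) (T : E →ₗ[ℂ] F)
    (p : Seminorm ℂ Z) : ℝ :=
  sInf {C : ℝ | 0 ≤ C ∧ ∀ x : E, BF.tilde p (T x) ≤ C * BE.tilde p x}

/-- The topology of `E` is the one of a topological VE-space: it is generated by the
seminorms `p̃` for `p ∈ S`. -/
def IsVETopology [TopologicalSpace E] (B : Gramian D E) (S : Set (Seminorm ℂ Z)) : Prop :=
  ∃ h : Nonempty ↥S, letI := h;
    ∃ q : ↥S → Seminorm ℂ E, (∀ (p : ↥S) (x : E), q p x = B.tilde p.1 x) ∧ WithSeminorms q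

end Gramian

/-- A barrel: a closed, absorbent, balanced, convex set. -/
def IsBarrel {E : Type*} [AddCommGroup E] [Module ℂ E] [TopologicalSpace E] (s : Set E) : Prop :=
  IsClosed s ∧ Absorbent ℂ s ∧ Balanced ℂ s ∧ Convex ℝ s

/-- A (complex) topological vector space is barrelled if every barrel is a neighbourhood of `0`. -/
def BarrelledSp (E : Type*) [AddCommGroup E] [Module ℂ E] [TopologicalSpace E] : Prop :=
  ∀ s : Set E, IsBarrel s → s ∈ 𝓝 (0 : E)

/-- A barrel with respect to the topology of a norm function `N`. -/
def IsBarrelWrtNorm {V : Type*} [AddCommGroup V] [Module ℂ V] (N : V → ℝ) (s : Set V) : Prop :=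
  (∀ x : V, (∀ ε : ℝ, 0 < ε → ∃ y ∈ s, N (x - y) < ε) → x ∈ s) ∧
  Absorbent ℂ s ∧ Balanced ℂ s ∧ Convex ℝ s

/-- Barrelledness with respect to the topology of a norm function `N`. -/
def BarrelledWrtNorm {V : Type*} [AddCommGroup V] [Module ℂ V] (N : V → ℝ) : Prop :=
  ∀ s : Set V, IsBarrelWrtNorm N s → ∃ ε : ℝ, 0 < ε ∧ ∀ x : V, N x < ε → x ∈ s

/-- The kernel of a seminorm, as a submodule. -/
def semKer {Z : Type*} [AddCommGroup Z] [Module ℂ Z] (p : Seminorm ℂ Z) : Submodule ℂ Z where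
  carrier := {z | p z = 0}
  add_mem' := by
    intro a b ha hb
    simp only [Set.mem_setOf_eq] at ha hb ⊢
    exact le_antisymm ((map_add_le_add p a b).trans (by simp [ha, hb])) (apply_nonneg p _)
  zero_mem' := map_zero p
  smul_mem' := by
    intro c x hx
    simp only [Set.mem_setOf_eq] at hx ⊢
    rw [map_smul_eq_mul, hx, mul_zero]

namespace St16

variable {Z : Type*} [NormedAddCommGroup Z] [NormedSpace ℂ Z]
variable {E : Type*} [AddCommGroup E] [Module ℂ E]
variable {D : OrderedStarData Z}

lemma star_zero (D : OrderedStarData Z) : D.star 0 = 0 := by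
  simpa using D.star_smul 0 (0 : Z)

lemma g_smul_left (B : Gramian D E) (c : ℂ) (x y : E) :
    B.inner (c • x) y = (starRingEnd ℂ) c • B.inner x y := by
  rw [B.inner_herm, B.inner_smul_right, D.star_smul, ← B.inner_herm]

lemma g_add_left (B : Gramian D E) (x₁ x₂ y : E) :
    B.inner (x₁ + x₂) y = B.inner x₁ y + B.inner x₂ y := by
  rw [B.inner_herm, B.inner_add_right, D.star_add, ← B.inner_herm, ← B.inner_herm]

lemma g_zero_right (B : Gramian D E) (x : E) : B.inner x 0 = 0 := by
  have h := B.inner_smul_right 0 x 0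
  simpa using h

lemma g_zero_left (B : Gramian D E) (y : E) : B.inner 0 y = 0 := by
  rw [B.inner_herm, g_zero_right, star_zero]

/-- The pre-norm on a VE-space. -/
noncomputable def NN (B : Gramian D E) (x : E) : ℝ := Real.sqrt ‖B.inner x x‖

lemma NN_nonneg (B : Gramian D E) (x : E) : 0 ≤ NN B x := Real.sqrt_nonneg _

lemma NN_sq (B : Gramian D E) (x : E) : NN B x ^ 2 = ‖B.inner x x‖ :=
  Real.sq_sqrt (norm_nonneg _)

lemma g_self_smul (B : Gramian D E) (c : ℂ) (x : E) :
    B.inner (c • x) (c • x) = (c * (starRingEnd ℂ) c) • B.inner x x := by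
  rw [B.inner_smul_right, g_smul_left, smul_smul]

lemma NN_smul (B : Gramian D E) (c : ℂ) (x : E) : NN B (c • x) = ‖c‖ * NN B x := by
  unfold NN
  rw [g_self_smul, norm_smul, norm_mul]
  have h1 : ‖(starRingEnd ℂ) c‖ = ‖c‖ := by simp
  rw [h1, Real.sqrt_mul (by positivity), Real.sqrt_mul_self (norm_nonneg c)]

lemma NN_zero (B : Gramian D E) : NN B 0 = 0 := by
  unfold NN; rw [g_zero_right]; simp

lemma eq_zero_of_NN_eq_zero (B : Gramian D E) {x : E} (h : NN B x = 0) : x = 0 := by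
  have h1 : ‖B.inner x x‖ = 0 := by
    rw [← NN_sq B x, h]; ring
  exact B.inner_self_eq_zero x (norm_eq_zero.mp h1)

lemma NN_neg (B : Gramian D E) (x : E) : NN B (-x) = NN B x := by
  rw [← neg_one_smul ℂ x, NN_smul]; simp

lemma NN_sub_symm (B : Gramian D E) (x y : E) : NN B (x - y) = NN B (y - x) := by
  rw [← NN_neg, neg_sub]

lemma g_expand_add (B : Gramian D E) (x y : E) :
    B.inner (x + y) (x + y) =
      B.inner x x + B.inner x y + B.inner y x + B.inner y y := by
  rw [B.inner_add_right, g_add_left, g_add_left]; abel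

lemma g_expand_sub (B : Gramian D E) (x y : E) :
    B.inner (x - y) (x - y) =
      B.inner x x - B.inner x y - B.inner y x + B.inner y y := by
  have h : x - y = x + (-1 : ℂ) • y := by
    rw [neg_one_smul]; abel
  rw [h, g_expand_add, B.inner_smul_right, g_smul_left, g_self_smul]
  simp only [map_neg, map_one, neg_one_smul, neg_smul, one_smul, neg_neg,
    mul_neg, mul_one, neg_mul, one_mul]
  abel

lemma g_parallelogram (B : Gramian D E) (u v : E) :
    B.inner (u + v) (u + v) + B.inner (u - v) (u - v) =
      (B.inner u u + B.inner u u) + (B.inner v v + B.inner v v) := by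
  rw [g_expand_add, g_expand_sub]; abel

section Inc

variable (hinc : ∀ x y : Z, x ∈ D.cone → y - x ∈ D.cone → ‖x‖ ≤ ‖y‖)

include hinc

lemma NN_add_le (B : Gramian D E) (u v : E) :
    NN B (u + v) ≤ 2 * (NN B u + NN B v) := by
  have hpar := g_parallelogram B u v
  have hd : (B.inner u u + B.inner u u + (B.inner v v + B.inner v v))
      - B.inner (u + v) (u + v) = B.inner (u - v) (u - v) := by
    rw [sub_eq_iff_eq_add, ← hpar]; abel
  have h1 : ‖B.inner (u + v) (u + v)‖ ≤
      ‖B.inner u u + B.inner u u + (B.inner v v + B.inner v v)‖ := by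
    apply hinc _ _ (B.inner_self_mem _)
    rw [hd]; exact B.inner_self_mem _
  have h2 : ‖B.inner u u + B.inner u u + (B.inner v v + B.inner v v)‖ ≤
      2 * ‖B.inner u u‖ + 2 * ‖B.inner v v‖ := by
    calc ‖B.inner u u + B.inner u u + (B.inner v v + B.inner v v)‖
        ≤ ‖B.inner u u + B.inner u u‖ + ‖B.inner v v + B.inner v v‖ := norm_add_le _ _
      _ ≤ (‖B.inner u u‖ + ‖B.inner u u‖) + (‖B.inner v v‖ + ‖B.inner v v‖) :=
          add_le_add (norm_add_le _ _) (norm_add_le _ _)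
      _ = 2 * ‖B.inner u u‖ + 2 * ‖B.inner v v‖ := by ring
  have hα : NN B u ^ 2 = ‖B.inner u u‖ := NN_sq B u
  have hβ : NN B v ^ 2 = ‖B.inner v v‖ := NN_sq B v
  have key : ‖B.inner (u + v) (u + v)‖ ≤ (2 * (NN B u + NN B v)) ^ 2 := by
    nlinarith [NN_nonneg B u, NN_nonneg B v]
  calc NN B (u + v) = Real.sqrt ‖B.inner (u + v) (u + v)‖ := rfl
    _ ≤ Real.sqrt ((2 * (NN B u + NN B v)) ^ 2) := Real.sqrt_le_sqrt key
    _ = 2 * (NN B u + NN B v) := Real.sqrt_sq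
        (by have := NN_nonneg B u; have := NN_nonneg B v; linarith)

lemma sandwich (u v : Z) (h1 : u - v ∈ D.cone) (h2 : u + v ∈ D.cone) :
    ‖v‖ ≤ 3 * ‖u‖ := by
  have h3 : ‖u + v‖ ≤ ‖u + u‖ := by
    apply hinc _ _ h2
    have : u + u - (u + v) = u - v := by abel
    rw [this]; exact h1
  have h4 : ‖u + u‖ ≤ 2 * ‖u‖ := by
    calc ‖u + u‖ ≤ ‖u‖ + ‖u‖ := norm_add_le _ _
      _ = 2 * ‖u‖ := by ring
  have h5 : ‖v‖ ≤ ‖u + v‖ + ‖u‖ := by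
    calc ‖v‖ = ‖(u + v) - u‖ := by congr 1; abel
      _ ≤ ‖u + v‖ + ‖u‖ := norm_sub_le _ _
  linarith

lemma schwarz_mu (B : Gramian D E) (x y : E) (μ : ℝ) (hμ : 0 < μ) :
    ‖B.inner x y + B.inner y x‖ ≤
      3 * (μ * ‖B.inner x x‖ + ‖B.inner y y‖ / μ) := by
  set s : ℝ := Real.sqrt μ with hs
  have hs0 : 0 < s := Real.sqrt_pos.mpr hμ
  have hs2 : s * s = μ := Real.mul_self_sqrt hμ.le
  set X : E := ((s : ℂ)) • x
  set Y : E := (((s⁻¹ : ℝ) : ℂ)) • y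
  have hXY : B.inner X Y = B.inner x y := by
    rw [B.inner_smul_right, g_smul_left]
    rw [smul_smul]
    have : ((s⁻¹ : ℝ) : ℂ) * (starRingEnd ℂ) ((s : ℂ)) = 1 := by
      rw [Complex.conj_ofReal]
      norm_cast
      field_simp
    rw [this, one_smul]
  have hYX : B.inner Y X = B.inner y x := by
    rw [B.inner_smul_right, g_smul_left]
    rw [smul_smul]
    have : ((s : ℝ) : ℂ) * (starRingEnd ℂ) (((s⁻¹ : ℝ) : ℂ)) = 1 := by
      rw [Complex.conj_ofReal]
      norm_cast
      field_simp
    rw [this, one_smul]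
  have hXX : ‖B.inner X X‖ = μ * ‖B.inner x x‖ := by
    rw [g_self_smul, Complex.conj_ofReal]
    rw [norm_smul]
    congr 1
    push_cast [← hs2]
    rw [← Complex.ofReal_mul]
    rw [Complex.norm_real]
    rw [Real.norm_eq_abs, abs_of_nonneg (by positivity)]
  have hYY : ‖B.inner Y Y‖ = ‖B.inner y y‖ / μ := by
    rw [g_self_smul, Complex.conj_ofReal]
    rw [norm_smul]
    rw [← Complex.ofReal_mul, Complex.norm_real, Real.norm_eq_abs,
      abs_of_nonneg (by positivity)]
    rw [div_eq_inv_mul, ← hs2]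
    congr 1
    rw [mul_inv]
  have hplus : B.inner X X + B.inner Y Y + (B.inner x y + B.inner y x) =
      B.inner (X + Y) (X + Y) := by
    rw [g_expand_add, hXY, hYX]; abel
  have hminus : B.inner X X + B.inner Y Y - (B.inner x y + B.inner y x) =
      B.inner (X - Y) (X - Y) := by
    rw [g_expand_sub, hXY, hYX]; abel
  have hsand := sandwich hinc (B.inner X X + B.inner Y Y) (B.inner x y + B.inner y x)
    (by rw [hminus]; exact B.inner_self_mem _)
    (by rw [hplus]; exact B.inner_self_mem _)
  have hnu : ‖B.inner X X + B.inner Y Y‖ ≤ μ * ‖B.inner x x‖ + ‖B.inner y y‖ / μ := by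
    calc ‖B.inner X X + B.inner Y Y‖ ≤ ‖B.inner X X‖ + ‖B.inner Y Y‖ := norm_add_le _ _
      _ = μ * ‖B.inner x x‖ + ‖B.inner y y‖ / μ := by rw [hXX, hYY]
  linarith

lemma schwarz_sym (B : Gramian D E) (x y : E) :
    ‖B.inner x y + B.inner y x‖ ≤ 6 * NN B x * NN B y := by
  rcases eq_or_lt_of_le (NN_nonneg B x) with h0 | h0
  · have hx : x = 0 := eq_zero_of_NN_eq_zero B h0.symm
    rw [hx, g_zero_left, g_zero_right]
    have ha := NN_nonneg B (0 : E); have hb := NN_nonneg B y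
    simp only [add_zero, norm_zero]
    nlinarith
  rcases eq_or_lt_of_le (NN_nonneg B y) with h1 | h1
  · have hy : y = 0 := eq_zero_of_NN_eq_zero B h1.symm
    rw [hy, g_zero_left, g_zero_right]
    have ha := NN_nonneg B x; have hb := NN_nonneg B (0 : E)
    simp only [add_zero, norm_zero]
    nlinarith
  have hμ : 0 < NN B y / NN B x := div_pos h1 h0
  have h := schwarz_mu hinc B x y _ hμ
  have hα : NN B x ^ 2 = ‖B.inner x x‖ := NN_sq B x
  have hβ : NN B y ^ 2 = ‖B.inner y y‖ := NN_sq B y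
  have he : (NN B y / NN B x) * ‖B.inner x x‖ + ‖B.inner y y‖ / (NN B y / NN B x) =
      2 * (NN B x * NN B y) := by
    rw [← hα, ← hβ]
    field_simp
    ring
  rw [he] at h
  linarith

lemma schwarz (B : Gramian D E) (x y : E) :
    ‖B.inner x y‖ ≤ 6 * NN B x * NN B y := by
  have h1 := schwarz_sym hinc B x y
  have h2 := schwarz_sym hinc B x (Complex.I • y)
  have e1 : B.inner x (Complex.I • y) = Complex.I • B.inner x y :=
    B.inner_smul_right _ _ _
  have e2 : B.inner (Complex.I • y) x = -(Complex.I • B.inner y x) := by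
    rw [g_smul_left]
    simp [Complex.conj_I]
  have e3 : NN B (Complex.I • y) = NN B y := by
    rw [NN_smul]; simp
  rw [e1, e2, e3] at h2
  have e4 : Complex.I • B.inner x y + -(Complex.I • B.inner y x) =
      Complex.I • (B.inner x y - B.inner y x) := by
    rw [smul_sub]; abel
  rw [e4, norm_smul] at h2
  simp only [Complex.norm_I, one_mul] at h2
  have e5 : B.inner x y + B.inner y x + (B.inner x y - B.inner y x) =
      (2 : ℝ) • B.inner x y := by
    rw [two_smul]; abel
  have h3 : (2 : ℝ) * ‖B.inner x y‖ ≤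
      ‖B.inner x y + B.inner y x‖ + ‖B.inner x y - B.inner y x‖ := by
    calc (2 : ℝ) * ‖B.inner x y‖ = ‖(2 : ℝ) • B.inner x y‖ := by
          rw [norm_smul]; simp
      _ = ‖B.inner x y + B.inner y x + (B.inner x y - B.inner y x)‖ := by rw [e5]
      _ ≤ _ := norm_add_le _ _
  linarith

end Inc

/-- The sets used in the Baire-type argument. -/
def Bpred (B : Gramian D E) (R : E → E) (n : ℕ) (x : E) : Prop :=
  ∀ y : E, NN B y ≤ 1 → ‖B.inner x (R y)‖ ≤ (n : ℝ)

lemma Bpred_avoid (hinc : ∀ x y : Z, x ∈ D.cone → y - x ∈ D.cone → ‖x‖ ≤ ‖y‖)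
    (B : Gramian D E) (R : E → E) {k : ℕ} {z : E} (h : ¬ Bpred B R k z) :
    ∃ η : ℝ, 0 < η ∧ ∀ w : E, NN B (w - z) ≤ 2 * η → ¬ Bpred B R k w := by
  unfold Bpred at h
  push_neg at h
  obtain ⟨y, hy1, hy2⟩ := h
  set M := NN B (R y) with hM
  have hM0 : 0 ≤ M := NN_nonneg _ _
  set δ := ‖B.inner z (R y)‖ - (k : ℝ) with hδ
  have hδ0 : 0 < δ := by simp only [hδ]; linarith
  refine ⟨δ / (12 * (M + 1)), by positivity, ?_⟩
  intro w hw hB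
  have hwb := hB y hy1
  have hsplit : B.inner z (R y) = B.inner w (R y) + B.inner (z - w) (R y) := by
    rw [← g_add_left]
    congr 1
    abel
  have htri : ‖B.inner z (R y)‖ ≤ ‖B.inner w (R y)‖ + ‖B.inner (z - w) (R y)‖ := by
    rw [hsplit]; exact norm_add_le _ _
  have hsch : ‖B.inner (z - w) (R y)‖ ≤ 6 * NN B (z - w) * M :=
    schwarz hinc B _ _
  have hzw : NN B (z - w) = NN B (w - z) := NN_sub_symm B z w
  have hbound : 6 * NN B (z - w) * M ≤ 6 * (2 * (δ / (12 * (M + 1)))) * M := by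
    have := NN_nonneg B (z - w)
    rw [hzw]
    nlinarith
  have hfin : 6 * (2 * (δ / (12 * (M + 1)))) * M < δ := by
    rw [show 6 * (2 * (δ / (12 * (M + 1)))) * M = δ * M / (M + 1) by field_simp; ring]
    rw [div_lt_iff₀ (by linarith)]
    nlinarith
  linarith

lemma Bpred_dense (B : Gramian D E) (R : E → E)
    (hcc : ∀ (n : ℕ) (ε : ℝ), 0 < ε → ∃ w : E, NN B w < ε ∧ ¬ Bpred B R n w) :
    ∀ (n : ℕ) (c : E) (ε : ℝ), 0 < ε → ∃ z : E, NN B (z - c) < ε ∧ ¬ Bpred B R n z := by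
  intro n c ε hε
  by_contra hcon
  push_neg at hcon
  obtain ⟨w, hw1, hw2⟩ := hcc n ε hε
  apply hw2
  intro y hy
  have hc1 : Bpred B R n (c + w) := hcon _ (by rw [add_sub_cancel_left]; exact hw1)
  have hc2 : Bpred B R n (c - w) := by
    apply hcon
    have : c - w - c = -w := by abel
    rw [this, NN_neg]; exact hw1
  have h1 := hc1 y hy
  have h2 := hc2 y hy
  have hkey : B.inner (c + w) (R y) - B.inner (c - w) (R y) = (2 : ℝ) • B.inner w (R y) := by
    have hsum : c + w = (c - w) + (w + w) := by abel
    rw [hsum, g_add_left, g_add_left, two_smul]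
    abel
  have h3 : ‖(2 : ℝ) • B.inner w (R y)‖ ≤ ‖B.inner (c + w) (R y)‖ + ‖B.inner (c - w) (R y)‖ := by
    rw [← hkey]; exact norm_sub_le _ _
  rw [norm_smul] at h3
  simp only [Real.norm_ofNat] at h3
  linarith

end St16

/-- Every adjointable operator from a normed VH-space `H` over a Banach
ordered `*`-space `Z` to a normed VE-space `K` over `Z` is bounded. -/
theorem statement16 {Z H K : Type*} [NormedAddCommGroup Z] [NormedSpace ℂ Z] [CompleteSpace Z]
    [AddCommGroup H] [Module ℂ H] [AddCommGroup K] [Module ℂ K]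
    (D : OrderedStarData Z)
    (hcone_closed : IsClosed D.cone)
    (hnorm_star : ∀ z : Z, ‖D.star z‖ = ‖z‖)
    (hnorm_inc : ∀ x y : Z, x ∈ D.cone → y - x ∈ D.cone → ‖x‖ ≤ ‖y‖)
    (BH : Gramian D H) (BK : Gramian D K)
    -- `H` is complete in the norm `‖x‖_H = ‖[x,x]‖^{1/2}`
    (hHcomplete : ∀ u : ℕ → H,
      (∀ ε : ℝ, 0 < ε → ∃ N : ℕ, ∀ m n : ℕ, N ≤ m → N ≤ n →
        Real.sqrt ‖BH.inner (u m - u n) (u m - u n)‖ < ε) →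
      ∃ x : H, ∀ ε : ℝ, 0 < ε → ∃ N : ℕ, ∀ n : ℕ, N ≤ n →
        Real.sqrt ‖BH.inner (u n - x) (u n - x)‖ < ε)
    (T : H →ₗ[ℂ] K) (hT : BH.Adjointable BK T) :
    ∃ C : ℝ, 0 ≤ C ∧ ∀ x : H,
      Real.sqrt ‖BK.inner (T x) (T x)‖ ≤ C * Real.sqrt ‖BH.inner x x‖ := by
  classical
  obtain ⟨S, hS⟩ := hT
  set R : H → H := fun x => S (T x) with hR
  have hRsym : ∀ x y : H, BH.inner (R x) y = BH.inner x (R y) := by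
    intro x y
    calc BH.inner (R x) y = D.star (BH.inner y (S (T x))) := BH.inner_herm _ _
      _ = D.star (BK.inner (T y) (T x)) := by rw [hS y (T x)]
      _ = BK.inner (T x) (T y) := (BK.inner_herm _ _).symm
      _ = BH.inner x (S (T y)) := hS x (T y)
  by_cases hc : ∃ (n : ℕ) (ε : ℝ), 0 < ε ∧
      ∀ w : H, St16.NN BH w < ε → St16.Bpred BH R n w
  · -- some set Bpred n contains a ball: conclude boundedness
    obtain ⟨n, ε, hε, hball⟩ := hc
    refine ⟨Real.sqrt (2 * n / ε), Real.sqrt_nonneg _, ?_⟩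
    have key : ∀ u v : H, ‖BH.inner u (R v)‖ ≤
        (2 * n / ε) * (St16.NN BH u) * (St16.NN BH v) := by
      intro u v
      rcases eq_or_lt_of_le (St16.NN_nonneg BH u) with h0 | h0
      · have hu : u = 0 := St16.eq_zero_of_NN_eq_zero BH h0.symm
        rw [hu, St16.g_zero_left, norm_zero, St16.NN_zero]
        simp
      rcases eq_or_lt_of_le (St16.NN_nonneg BH v) with h1 | h1
      · have hv : v = 0 := St16.eq_zero_of_NN_eq_zero BH h1.symm
        have hv0 : R v = 0 := by rw [hv, hR]; simp
        rw [hv0, St16.g_zero_right, norm_zero, ← h1]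
        simp [mul_comm]
      set r₁ : ℝ := ε / 2 * (St16.NN BH u)⁻¹ with hr₁
      set r₂ : ℝ := (St16.NN BH v)⁻¹ with hr₂
      have hr₁0 : 0 < r₁ := by positivity
      have hr₂0 : 0 < r₂ := by positivity
      have hw : St16.NN BH (((r₁ : ℝ) : ℂ) • u) = ε / 2 := by
        rw [St16.NN_smul, Complex.norm_real, Real.norm_eq_abs, abs_of_pos hr₁0, hr₁]
        field_simp
      have hy' : St16.NN BH (((r₂ : ℝ) : ℂ) • v) = 1 := by
        rw [St16.NN_smul, Complex.norm_real, Real.norm_eq_abs, abs_of_pos hr₂0, hr₂]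
        field_simp
      have h1' := hball (((r₁ : ℝ) : ℂ) • u) (by rw [hw]; linarith)
        (((r₂ : ℝ) : ℂ) • v) (by rw [hy'])
      have hRs : R (((r₂ : ℝ) : ℂ) • v) = ((r₂ : ℝ) : ℂ) • R v := by
        rw [hR]; simp [map_smul]
      rw [hRs, BH.inner_smul_right, St16.g_smul_left, Complex.conj_ofReal,
        smul_smul, norm_smul] at h1'
      have hnr : ‖((r₂ : ℝ) : ℂ) * ((r₁ : ℝ) : ℂ)‖ = r₁ * r₂ := by
        rw [← Complex.ofReal_mul, Complex.norm_real, Real.norm_eq_abs,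
          abs_of_pos (by positivity), mul_comm]
      rw [hnr] at h1'
      -- h1' : r₁ * r₂ * ‖BH.inner u (R v)‖ ≤ n
      have hfin : ‖BH.inner u (R v)‖ ≤ n / (r₁ * r₂) := by
        rw [le_div_iff₀ (by positivity)]
        linarith [h1']
      have heq : (n : ℝ) / (r₁ * r₂) = (2 * n / ε) * (St16.NN BH u) * (St16.NN BH v) := by
        rw [hr₁, hr₂]
        field_simp
      rw [heq] at hfin
      exact hfin
    intro x
    have hx := key x x
    have e : BK.inner (T x) (T x) = BH.inner x (R x) := hS x (T x)
    rw [e]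
    have h2 : ‖BH.inner x (R x)‖ ≤ (2 * n / ε) * (St16.NN BH x) ^ 2 := by
      nlinarith [hx]
    calc Real.sqrt ‖BH.inner x (R x)‖
        ≤ Real.sqrt ((2 * n / ε) * (St16.NN BH x) ^ 2) := Real.sqrt_le_sqrt h2
      _ = Real.sqrt (2 * n / ε) * Real.sqrt ((St16.NN BH x) ^ 2) :=
          Real.sqrt_mul (by positivity) _
      _ = Real.sqrt (2 * n / ε) * St16.NN BH x := by
          rw [Real.sqrt_sq (St16.NN_nonneg BH x)]
  · -- otherwise run the Baire-category argument to reach a contradiction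
    exfalso
    push_neg at hc
    have hcc : ∀ (n : ℕ) (ε : ℝ), 0 < ε →
        ∃ w : H, St16.NN BH w < ε ∧ ¬ St16.Bpred BH R n w := by
      intro n ε hε
      obtain ⟨w, hw1, hw2⟩ := hc n ε hε
      exact ⟨w, hw1, hw2⟩
    have hdense := St16.Bpred_dense BH R hcc
    have hstep : ∀ (k : ℕ) (c : H) (ρ : ℝ), 0 < ρ →
        ∃ z : H, ∃ η : ℝ, 0 < η ∧ St16.NN BH (z - c) < ρ / 8 ∧ η ≤ ρ / 8 ∧
          ∀ w : H, St16.NN BH (w - z) ≤ 2 * η → ¬ St16.Bpred BH R k w := by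
      intro k c ρ hρ
      obtain ⟨z, hz1, hz2⟩ := hdense k c (ρ / 8) (by positivity)
      obtain ⟨η₀, hη₀, havoid⟩ := St16.Bpred_avoid hnorm_inc BH R hz2
      refine ⟨z, min η₀ (ρ / 8), lt_min hη₀ (by positivity), hz1, min_le_right _ _, ?_⟩
      intro w hwle
      apply havoid
      have : 2 * min η₀ (ρ / 8) ≤ 2 * η₀ := by
        have := min_le_left η₀ (ρ / 8); linarith
      linarith
    choose zf ηf hη hzlt hηle havoid using hstep
    -- recursive construction of the sequence of centers and radii
    let g : ℕ → {p : H × ℝ // 0 < p.2} := fun n =>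
      Nat.rec ⟨((0 : H), (1 : ℝ)), one_pos⟩
        (fun k p => ⟨(zf k p.1.1 p.1.2 p.2, ηf k p.1.1 p.1.2 p.2),
          hη k p.1.1 p.1.2 p.2⟩) n
    set xs : ℕ → H := fun k => (g k).1.1 with hxs
    set ρs : ℕ → ℝ := fun k => (g k).1.2 with hρs
    have hρpos : ∀ k, 0 < ρs k := fun k => (g k).2
    have hρ0 : ρs 0 = 1 := rfl
    have hgx : ∀ k, xs (k + 1) = zf k (xs k) (ρs k) (hρpos k) := fun k => rfl
    have hgρ : ∀ k, ρs (k + 1) = ηf k (xs k) (ρs k) (hρpos k) := fun k => rfl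
    have hstep1 : ∀ k, St16.NN BH (xs (k + 1) - xs k) < ρs k / 8 := by
      intro k; rw [hgx k]; exact hzlt k (xs k) (ρs k) (hρpos k)
    have hstep2 : ∀ k, ρs (k + 1) ≤ ρs k / 8 := by
      intro k; rw [hgρ k]; exact hηle k (xs k) (ρs k) (hρpos k)
    have hstep3 : ∀ k (w : H), St16.NN BH (w - xs (k + 1)) ≤ 2 * ρs (k + 1) →
        ¬ St16.Bpred BH R k w := by
      intro k w hw
      rw [hgρ k] at hw
      rw [hgx k] at hw
      exact havoid k (xs k) (ρs k) (hρpos k) w hw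
    have hdistd : ∀ (d k : ℕ), St16.NN BH (xs (k + d) - xs k) ≤ ρs k / 2 := by
      intro d
      induction d with
      | zero =>
        intro k
        simp only [Nat.add_zero, sub_self, St16.NN_zero]
        linarith [hρpos k]
      | succ d ih =>
        intro k
        have hidx : k + (d + 1) = (k + 1) + d := by omega
        have h1 : xs (k + (d + 1)) - xs k =
            (xs ((k + 1) + d) - xs (k + 1)) + (xs (k + 1) - xs k) := by
          rw [hidx]; abel
        rw [h1]
        have h2 := St16.NN_add_le hnorm_inc BH
          (xs ((k + 1) + d) - xs (k + 1)) (xs (k + 1) - xs k)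
        have h3 := ih (k + 1)
        have h4 := hstep1 k
        have h5 := hstep2 k
        have h6 := hρpos k
        linarith
    have hρbd : ∀ k, ρs k ≤ (1 / 2 : ℝ) ^ k := by
      intro k
      induction k with
      | zero => rw [hρ0]; norm_num
      | succ k ih =>
        have h1 := hstep2 k
        have h2 : ((1 / 2 : ℝ)) ^ (k + 1) = (1 / 2 : ℝ) ^ k / 2 := by ring
        have h3 := hρpos k
        rw [h2]
        linarith
    have hcauchy : ∀ ε : ℝ, 0 < ε → ∃ Nk : ℕ, ∀ m nn : ℕ, Nk ≤ m → Nk ≤ nn →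
        St16.NN BH (xs m - xs nn) < ε := by
      intro ε hε
      obtain ⟨Nk, hNk⟩ := exists_pow_lt_of_lt_one hε (by norm_num : (1 / 2 : ℝ) < 1)
      refine ⟨Nk, ?_⟩
      have main : ∀ m nn : ℕ, Nk ≤ nn → nn ≤ m → St16.NN BH (xs m - xs nn) < ε := by
        intro m nn hn hnm
        obtain ⟨d, rfl⟩ : ∃ d, m = nn + d := ⟨m - nn, by omega⟩
        have h1 := hdistd d nn
        have h2 : ρs nn ≤ (1 / 2 : ℝ) ^ nn := hρbd nn
        have h3 : ((1 / 2 : ℝ)) ^ nn ≤ (1 / 2 : ℝ) ^ Nk :=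
          pow_le_pow_of_le_one (by norm_num) (by norm_num) hn
        linarith
      intro m nn hm hn
      rcases le_total nn m with h | h
      · exact main m nn hn h
      · rw [St16.NN_sub_symm]; exact main nn m hm h
    obtain ⟨xl, hxl⟩ := hHcomplete xs (by
      intro ε hε
      obtain ⟨Nk, hNk⟩ := hcauchy ε hε
      exact ⟨Nk, fun m nn hm hn => hNk m nn hm hn⟩)
    have hnot : ∀ k, ¬ St16.Bpred BH R k xl := by
      intro k
      apply hstep3 k
      have hle : ∀ ε : ℝ, 0 < ε → St16.NN BH (xl - xs (k + 1)) ≤ ρs (k + 1) + ε := by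
        intro ε hε
        obtain ⟨Nk, hNk⟩ := hxl (ε / 2) (by positivity)
        set nn := max Nk (k + 1) with hnn
        have h1 : St16.NN BH (xs nn - xl) < ε / 2 := hNk nn (le_max_left _ _)
        have h2 : St16.NN BH (xs nn - xs (k + 1)) ≤ ρs (k + 1) / 2 := by
          obtain ⟨d, hd⟩ : ∃ d, nn = (k + 1) + d :=
            ⟨nn - (k + 1), by have := le_max_right Nk (k + 1); omega⟩
          rw [hd]; exact hdistd d (k + 1)
        have h3 : xl - xs (k + 1) = (xl - xs nn) + (xs nn - xs (k + 1)) := by abel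
        rw [h3]
        have h4 := St16.NN_add_le hnorm_inc BH (xl - xs nn) (xs nn - xs (k + 1))
        have h5 : St16.NN BH (xl - xs nn) < ε / 2 := by
          rw [St16.NN_sub_symm]; exact h1
        linarith
      have hfin : St16.NN BH (xl - xs (k + 1)) ≤ ρs (k + 1) :=
        le_of_forall_pos_le_add hle
      linarith [hρpos (k + 1)]
    apply hnot ⌈6 * St16.NN BH (R xl)⌉₊
    intro y hy
    rw [← hRsym xl y]
    calc ‖BH.inner (R xl) y‖ ≤ 6 * St16.NN BH (R xl) * St16.NN BH y :=
        St16.schwarz hnorm_inc BH _ _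
      _ ≤ 6 * St16.NN BH (R xl) * 1 := by
          have h0 := St16.NN_nonneg BH (R xl)
          nlinarith [St16.NN_nonneg BH y]
      _ = 6 * St16.NN BH (R xl) := mul_one _
      _ ≤ ⌈6 * St16.NN BH (R xl)⌉₊ := Nat.le_ceil _
end

section
/- Let H be a normed VH-space over a Banach ordered *-space Z. Then the *-algebra L*(H) of all adjointable linear operators T : H → H, with the operator norm ‖T‖ := sup{‖Tx‖_H : x ∈ H, ‖x‖_H ≤ 1} (where ‖x‖_H = ‖[x,x]‖^{1/2}), is a C*-algebra: every adjointable operator is bounded, ‖T*‖ = ‖T‖, ‖S ∘ T‖ ≤ ‖S‖ ‖T‖, ‖T* ∘ T‖ = ‖T‖², and L*(H) is complete in this norm. -/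
open scoped ComplexConjugate Topology

/-- The operator norm of an operator on a normed VH-space:
`‖T‖ = sup {‖Tx‖_H : ‖x‖_H ≤ 1}`. -/
noncomputable def vhOpNorm {Z H : Type*} [NormedAddCommGroup Z] [NormedSpace ℂ Z]
    {D : OrderedStarData Z} [AddCommGroup H] [Module ℂ H]
    (BH : Gramian D H) (T : H →ₗ[ℂ] H) : ℝ :=
  sSup ((fun x => Real.sqrt ‖BH.inner (T x) (T x)‖) ''
    {x : H | Real.sqrt ‖BH.inner x x‖ ≤ 1})

/-! The gramian is controlled by rescaling: `[x, y]` is unchanged under `x ↦ t x`, `y ↦ t⁻¹ y`,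
so an estimate by `‖u‖² + ‖v‖²` over all such pairs improves, by AM-GM, to `2 ‖x‖ ‖y‖`.
Together with the positivity of `[u ± v, u ± v]` and the monotonicity of the norm of `Z`, this
gives the triangle inequality (so `H` is a Banach space), the continuity bound
`‖[x, y]‖ ≤ 4 ‖x‖ ‖y‖`, and the Schwarz inequality `‖[x, y]‖ ≤ ‖x‖ ‖y‖` when `[x, y] ≥ 0`.
Continuity of the gramian closes the graph of an adjointable operator, which is therefore
bounded. The Schwarz inequality for `‖T x‖² = ‖[x, T* T x]‖` gives
`‖T‖² ≤ ‖T* T‖ ≤ ‖T*‖ ‖T‖`, hence `‖T‖ ≤ ‖T*‖`, equality by symmetry, and the `C*`-identity.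
Finally, a Cauchy sequence of adjointable operators converges in the Banach space of bounded
operators together with its adjoints, and adjointness passes to the limit. -/

open Filter

theorem le_two_mul_of_forall_le_sq_add_sq {f α β : ℝ} (hα : 0 ≤ α) (hβ : 0 ≤ β)
    (h : ∀ t : ℝ, 0 < t → f ≤ (t * α) ^ 2 + (t⁻¹ * β) ^ 2) : f ≤ 2 * α * β := by
  rcases hα.eq_or_lt with rfl | hα
  · simp only [mul_zero, zero_pow two_ne_zero, zero_add] at h
    have hlim : Tendsto (fun t : ℝ => (t⁻¹ * β) ^ 2) atTop (𝓝 0) := by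
      simpa using (tendsto_inv_atTop_zero.mul_const β).pow 2
    simpa using ge_of_tendsto hlim ((eventually_gt_atTop 0).mono h)
  rcases hβ.eq_or_lt with rfl | hβ
  · simp only [mul_zero, zero_pow two_ne_zero, add_zero] at h
    have hlim : Tendsto (fun t : ℝ => (t * α) ^ 2) (𝓝[>] 0) (𝓝 0) :=
      tendsto_nhdsWithin_of_tendsto_nhds <|
        ((continuous_id.mul continuous_const).pow 2).tendsto' 0 0 (by simp)
    simpa using ge_of_tendsto hlim (eventually_nhdsWithin_of_forall h)
  · have ht : 0 < √(β / α) := Real.sqrt_pos.2 (div_pos hβ hα)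
    have ht2 : √(β / α) ^ 2 = β / α := Real.sq_sqrt (div_pos hβ hα).le
    convert h _ ht using 1
    rw [mul_pow, mul_pow, inv_pow, ht2]
    field_simp
    ring

theorem completeSpace_of_forall_cauchy_exists_tendsto {E : Type*} [NormedAddCommGroup E]
    (h : ∀ u : ℕ → E, (∀ ε : ℝ, 0 < ε → ∃ N : ℕ, ∀ m n : ℕ, N ≤ m → N ≤ n → ‖u m - u n‖ < ε) →
      ∃ x : E, ∀ ε : ℝ, 0 < ε → ∃ N : ℕ, ∀ n : ℕ, N ≤ n → ‖u n - x‖ < ε) :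
    CompleteSpace E := by
  refine Metric.complete_of_cauchySeq_tendsto fun u hu => ?_
  obtain ⟨x, hx⟩ := h u fun ε hε => (Metric.cauchySeq_iff.1 hu ε hε).imp
    fun N hN m n hm hn => by simpa only [dist_eq_norm] using hN m hm n hn
  exact ⟨x, Metric.tendsto_atTop.2 fun ε hε => (hx ε hε).imp
    fun N hN n hn => by simpa only [dist_eq_norm] using hN n hn⟩

namespace OrderedStarData

variable {Z : Type*} [NormedAddCommGroup Z] [NormedSpace ℂ Z] {D : OrderedStarData Z}

theorem norm_le_two_mul_of_add_mem_of_sub_mem (hinc : D.Increasing (normSeminorm ℂ Z))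
    {b c : Z} (hadd : c + b ∈ D.cone) (hsub : c - b ∈ D.cone) : ‖b‖ ≤ 2 * ‖c‖ := by
  have h₁ : ‖c + b‖ ≤ ‖c + c‖ := hinc _ _ hadd (by rwa [add_sub_add_left_eq_sub])
  have h₂ : ‖c - b‖ ≤ ‖c + c‖ := hinc _ _ hsub (by rwa [show c + c - (c - b) = c + b by abel])
  have h₃ : ‖b + b‖ ≤ ‖c + b‖ + ‖c - b‖ := by
    rw [show b + b = (c + b) - (c - b) by abel]
    exact norm_sub_le _ _
  have h₄ := norm_add_le c c
  rw [← two_smul ℝ b, norm_smul, Real.norm_two] at h₃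
  linarith

end OrderedStarData

namespace Gramian

variable {Z : Type*} [NormedAddCommGroup Z] [NormedSpace ℂ Z] {D : OrderedStarData Z}

section Algebra

variable {E F : Type*} [AddCommGroup E] [Module ℂ E] [AddCommGroup F] [Module ℂ F]
  (B : Gramian D E)

theorem inner_add_left (x y z : E) : B.inner (x + y) z = B.inner x z + B.inner y z := by
  rw [B.inner_herm, B.inner_add_right, D.star_add, ← B.inner_herm, ← B.inner_herm]

theorem inner_smul_left (c : ℂ) (x y : E) :
    B.inner (c • x) y = (starRingEnd ℂ) c • B.inner x y := by
  rw [B.inner_herm, B.inner_smul_right, D.star_smul, ← B.inner_herm]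

theorem inner_sub_left (x y z : E) : B.inner (x - y) z = B.inner x z - B.inner y z :=
  eq_sub_of_add_eq (by rw [← B.inner_add_left, sub_add_cancel])

theorem inner_sub_right (x y z : E) : B.inner x (y - z) = B.inner x y - B.inner x z :=
  eq_sub_of_add_eq (by rw [← B.inner_add_right, sub_add_cancel])

theorem inner_zero_right (x : E) : B.inner x 0 = 0 := by
  simpa using B.inner_smul_right 0 x 0

theorem inner_add_add_self (x y : E) :
    B.inner (x + y) (x + y) = B.inner x x + B.inner y y + (B.inner x y + B.inner y x) := by
  rw [B.inner_add_left, B.inner_add_right, B.inner_add_right]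
  abel

theorem inner_sub_sub_self (x y : E) :
    B.inner (x - y) (x - y) = B.inner x x + B.inner y y - (B.inner x y + B.inner y x) := by
  rw [B.inner_sub_left, B.inner_sub_right, B.inner_sub_right]
  abel

theorem IsAdjoint.symm {BE : Gramian D E} {BF : Gramian D F} {T : E →ₗ[ℂ] F} {S : F →ₗ[ℂ] E}
    (h : BE.IsAdjoint BF T S) : BF.IsAdjoint BE S T := fun y x => by
  rw [BE.inner_herm, ← h, ← BF.inner_herm]

theorem IsAdjoint.sub {BE : Gramian D E} {BF : Gramian D F} {T T' : E →ₗ[ℂ] F}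
    {S S' : F →ₗ[ℂ] E} (h : BE.IsAdjoint BF T S) (h' : BE.IsAdjoint BF T' S') :
    BE.IsAdjoint BF (T - T') (S - S') := fun x y => by
  simp only [LinearMap.sub_apply, BF.inner_sub_left, BE.inner_sub_right, h x y, h' x y]

end Algebra

section GramianNorm

variable {E : Type*} [AddCommGroup E] [Module ℂ E] (B : Gramian D E)

noncomputable def norm (x : E) : ℝ := √‖B.inner x x‖

theorem norm_nonneg (x : E) : 0 ≤ B.norm x := Real.sqrt_nonneg _

theorem sq_norm (x : E) : B.norm x ^ 2 = ‖B.inner x x‖ := Real.sq_sqrt (_root_.norm_nonneg _)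

theorem norm_zero : B.norm 0 = 0 := by
  simp [norm, inner_zero_right]

theorem eq_zero_of_norm_eq_zero {x : E} (h : B.norm x = 0) : x = 0 :=
  B.inner_self_eq_zero x (norm_eq_zero.1 (by rw [← B.sq_norm, h, sq, zero_mul]))

theorem norm_smul (c : ℂ) (x : E) : B.norm (c • x) = ‖c‖ * B.norm x := by
  rw [norm, B.inner_smul_right, B.inner_smul_left, smul_smul, Complex.mul_conj', _root_.norm_smul,
    Real.sqrt_mul (_root_.norm_nonneg _), ← Complex.ofReal_pow, Complex.norm_real,
    Real.norm_of_nonneg (by positivity), Real.sqrt_sq (_root_.norm_nonneg c), norm]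

theorem norm_neg (x : E) : B.norm (-x) = B.norm x := by
  simpa using B.norm_smul (-1) x

/-- Rescale `x ↦ t x`, `y ↦ t⁻¹ y`, which leaves `[x, y]` unchanged, and optimise in `t`. -/
theorem le_two_mul_norm_mul_norm {f : ℝ} {x y : E}
    (h : ∀ u v : E, B.inner u v = B.inner x y → B.inner v u = B.inner y x →
      f ≤ B.norm u ^ 2 + B.norm v ^ 2) :
    f ≤ 2 * B.norm x * B.norm y := by
  refine le_two_mul_of_forall_le_sq_add_sq (B.norm_nonneg x) (B.norm_nonneg y) fun t ht => ?_
  have hinner : ∀ (s : ℝ), s ≠ 0 → ∀ a b : E, B.inner ((s : ℂ) • a) ((s : ℂ)⁻¹ • b) = B.inner a b :=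
    fun s hs a b => by
      rw [B.inner_smul_right, B.inner_smul_left, smul_smul, Complex.conj_ofReal,
        inv_mul_cancel₀ (by exact_mod_cast hs), one_smul]
  have hnorm : ∀ (s : ℝ), 0 < s → ∀ a : E, B.norm ((s : ℂ) • a) = s * B.norm a := fun s hs a => by
    rw [B.norm_smul, Complex.norm_real, Real.norm_of_nonneg hs.le]
  convert h ((t : ℂ) • x) ((t : ℂ)⁻¹ • y) (hinner t ht.ne' x y) ?_ using 3
  · rw [hnorm t ht]
  · rw [← Complex.ofReal_inv, hnorm _ (inv_pos.2 ht)]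
  · simpa using hinner t⁻¹ (inv_ne_zero ht.ne') y x

theorem norm_inner_self_add_inner_self_le (u v : E) :
    ‖B.inner u u + B.inner v v‖ ≤ B.norm u ^ 2 + B.norm v ^ 2 := by
  simpa only [sq_norm] using norm_add_le _ _

theorem norm_add_le (hinc : D.Increasing (normSeminorm ℂ Z)) (x y : E) :
    B.norm (x + y) ≤ B.norm x + B.norm y := by
  have key : B.norm (x + y) ^ 2 - B.norm x ^ 2 - B.norm y ^ 2 ≤ 2 * B.norm x * B.norm y := by
    refine B.le_two_mul_norm_mul_norm fun u v huv hvu => ?_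
    have hsum : B.inner (x + y) (x + y) + B.inner (u - v) (u - v) =
        B.inner x x + B.inner y y + (B.inner u u + B.inner v v) := by
      rw [inner_add_add_self, inner_sub_sub_self, huv, hvu]
      abel
    have hle : B.norm (x + y) ^ 2 ≤ ‖B.inner x x + B.inner y y + (B.inner u u + B.inner v v)‖ :=
      B.sq_norm (x + y) ▸ hinc _ _ (B.inner_self_mem (x + y))
        (by rw [← hsum, add_sub_cancel_left]; exact B.inner_self_mem _)
    have := _root_.norm_add_le (B.inner x x + B.inner y y) (B.inner u u + B.inner v v)
    linarith [B.norm_inner_self_add_inner_self_le x y, B.norm_inner_self_add_inner_self_le u v]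
  nlinarith [B.norm_nonneg x, B.norm_nonneg y, B.norm_nonneg (x + y)]

theorem norm_inner_le_of_mem_cone (hinc : D.Increasing (normSeminorm ℂ Z))
    {x y : E} (h : B.inner x y ∈ D.cone) : ‖B.inner x y‖ ≤ B.norm x * B.norm y := by
  have hyx : B.inner y x = B.inner x y := by rw [B.inner_herm, D.cone_star _ h]
  have : 2 * ‖B.inner x y‖ ≤ 2 * B.norm x * B.norm y := by
    refine B.le_two_mul_norm_mul_norm fun u v huv hvu => ?_
    have hsum : B.inner x y + B.inner x y + B.inner (u - v) (u - v) =
        B.inner u u + B.inner v v := by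
      rw [inner_sub_sub_self, huv, hvu, hyx]
      abel
    have hle : ‖B.inner x y + B.inner x y‖ ≤ ‖B.inner u u + B.inner v v‖ :=
      hinc _ _ (D.cone_add _ h _ h)
        (by rw [← hsum, add_sub_cancel_left]; exact B.inner_self_mem _)
    rw [← two_smul ℝ, _root_.norm_smul, Real.norm_two] at hle
    linarith [B.norm_inner_self_add_inner_self_le u v]
  linarith

theorem norm_inner_add_inner_le (hinc : D.Increasing (normSeminorm ℂ Z)) (x y : E) :
    ‖B.inner x y + B.inner y x‖ ≤ 4 * B.norm x * B.norm y := by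
  have : ‖B.inner x y + B.inner y x‖ / 2 ≤ 2 * B.norm x * B.norm y := by
    refine B.le_two_mul_norm_mul_norm fun u v huv hvu => ?_
    have hle : ‖B.inner u v + B.inner v u‖ ≤ 2 * ‖B.inner u u + B.inner v v‖ :=
      D.norm_le_two_mul_of_add_mem_of_sub_mem hinc
        (by rw [← inner_add_add_self]; exact B.inner_self_mem _)
        (by rw [← inner_sub_sub_self]; exact B.inner_self_mem _)
    rw [huv, hvu] at hle
    linarith [B.norm_inner_self_add_inner_self_le u v]
  linarith

theorem norm_inner_le (hinc : D.Increasing (normSeminorm ℂ Z)) (x y : E) :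
    ‖B.inner x y‖ ≤ 4 * B.norm x * B.norm y := by
  have hpolar : (2 : ℂ) • B.inner x y = (B.inner x y + B.inner y x) -
      Complex.I • (B.inner x (Complex.I • y) + B.inner (Complex.I • y) x) := by
    rw [B.inner_smul_right, B.inner_smul_left, Complex.conj_I]
    simp only [smul_add, smul_neg, smul_smul, Complex.I_mul_I, neg_smul, one_smul]
    module
  have h₁ := B.norm_inner_add_inner_le hinc x y
  have h₂ := B.norm_inner_add_inner_le hinc x (Complex.I • y)
  have h₃ := norm_sub_le (B.inner x y + B.inner y x)
      (Complex.I • (B.inner x (Complex.I • y) + B.inner (Complex.I • y) x))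
  rw [B.norm_smul, Complex.norm_I, one_mul] at h₂
  rw [← hpolar, _root_.norm_smul, _root_.norm_smul, Complex.norm_I, one_mul] at h₃
  norm_num at h₃
  linarith

end GramianNorm

noncomputable def addGroupNorm {E : Type*} [AddCommGroup E] [Module ℂ E] (B : Gramian D E)
    (hinc : D.Increasing (normSeminorm ℂ Z)) : AddGroupNorm E where
  toFun := B.norm
  map_zero' := B.norm_zero
  add_le' := B.norm_add_le hinc
  neg' := B.norm_neg
  eq_zero_of_map_eq_zero' _ := B.eq_zero_of_norm_eq_zero

section Normed

variable {E F : Type*} [NormedAddCommGroup E] [NormedSpace ℂ E] [NormedAddCommGroup F]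
  [NormedSpace ℂ F] {BE : Gramian D E} {BF : Gramian D F}

theorem tendsto_inner_left (hinc : D.Increasing (normSeminorm ℂ Z))
    (hE : ∀ x : E, ‖x‖ = BE.norm x) {ι : Type*} {l : Filter ι} {a : ι → E} {x : E}
    (ha : Tendsto a l (𝓝 x)) (y : E) :
    Tendsto (fun i => BE.inner (a i) y) l (𝓝 (BE.inner x y)) := by
  rw [tendsto_iff_norm_sub_tendsto_zero] at ha ⊢
  refine squeeze_zero (fun _ => _root_.norm_nonneg _) (fun i => ?_)
    (by simpa using (ha.const_mul 4).mul_const ‖y‖)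
  rw [← BE.inner_sub_left, hE, hE]
  exact BE.norm_inner_le hinc _ _

theorem tendsto_inner_right (hinc : D.Increasing (normSeminorm ℂ Z))
    (hE : ∀ x : E, ‖x‖ = BE.norm x) {ι : Type*} {l : Filter ι} {a : ι → E} {x : E}
    (ha : Tendsto a l (𝓝 x)) (y : E) :
    Tendsto (fun i => BE.inner y (a i)) l (𝓝 (BE.inner y x)) := by
  rw [tendsto_iff_norm_sub_tendsto_zero] at ha ⊢
  refine squeeze_zero (fun _ => _root_.norm_nonneg _) (fun i => ?_)
    (by simpa using (ha.const_mul (4 * ‖y‖)))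
  rw [← BE.inner_sub_right, hE, hE]
  exact BE.norm_inner_le hinc _ _

theorem IsAdjoint.continuous [CompleteSpace E] [CompleteSpace F]
    (hinc : D.Increasing (normSeminorm ℂ Z))
    (hE : ∀ x : E, ‖x‖ = BE.norm x) (hF : ∀ y : F, ‖y‖ = BF.norm y)
    {T : E →ₗ[ℂ] F} {S : F →ₗ[ℂ] E} (h : BE.IsAdjoint BF T S) : Continuous T := by
  refine T.continuous_of_seq_closed_graph fun u x y hux huy => ?_
  have hzero : ∀ z, BF.inner (y - T x) z = 0 := fun z => by
    rw [BF.inner_sub_left, h, sub_eq_zero]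
    exact tendsto_nhds_unique ((tendsto_inner_left hinc hF huy z).congr fun n => h (u n) z)
      (tendsto_inner_left hinc hE hux (S z))
  exact sub_eq_zero.1 (BF.inner_self_eq_zero _ (hzero _))

theorem IsAdjoint.exists_continuousLinearMap [CompleteSpace E] [CompleteSpace F]
    (hinc : D.Increasing (normSeminorm ℂ Z))
    (hE : ∀ x : E, ‖x‖ = BE.norm x) (hF : ∀ y : F, ‖y‖ = BF.norm y)
    {T : E →ₗ[ℂ] F} {S : F →ₗ[ℂ] E} (h : BE.IsAdjoint BF T S) :
    ∃ (T₀ : E →L[ℂ] F) (S₀ : F →L[ℂ] E), (T₀ : E →ₗ[ℂ] F) = T ∧ (S₀ : F →ₗ[ℂ] E) = S :=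
  ⟨⟨T, h.continuous hinc hE hF⟩, ⟨S, h.symm.continuous hinc hF hE⟩, rfl, rfl⟩

theorem IsAdjoint.of_tendsto (hinc : D.Increasing (normSeminorm ℂ Z))
    (hE : ∀ x : E, ‖x‖ = BE.norm x) (hF : ∀ y : F, ‖y‖ = BF.norm y)
    {ι : Type*} {l : Filter ι} [l.NeBot] {T : ι → E →L[ℂ] F} {S : ι → F →L[ℂ] E}
    {L : E →L[ℂ] F} {M : F →L[ℂ] E} (h : ∀ i, BE.IsAdjoint BF (T i) (S i))
    (hT : Tendsto T l (𝓝 L)) (hS : Tendsto S l (𝓝 M)) : BE.IsAdjoint BF L M := fun x y =>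
  tendsto_nhds_unique
    ((tendsto_inner_left hinc hF (((continuous_eval_const x).tendsto L).comp hT) y).congr
      fun i => h i x y)
    (tendsto_inner_right hinc hE (((continuous_eval_const y).tendsto M).comp hS) x)

theorem IsAdjoint.sq_opNorm_le_opNorm_comp
    (hinc : D.Increasing (normSeminorm ℂ Z))
    (hE : ∀ x : E, ‖x‖ = BE.norm x) (hF : ∀ y : F, ‖y‖ = BF.norm y)
    {T : E →L[ℂ] F} {S : F →L[ℂ] E} (h : BE.IsAdjoint BF T S) : ‖T‖ ^ 2 ≤ ‖S.comp T‖ := by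
  have hpt : ∀ x, ‖T x‖ ≤ √‖S.comp T‖ * ‖x‖ := fun x => by
    have h₁ : ‖T x‖ ^ 2 ≤ ‖x‖ * ‖S (T x)‖ := by
      rw [hF, hE, hE, BF.sq_norm, show BF.inner (T x) (T x) = BE.inner x (S (T x)) from h x (T x)]
      exact BE.norm_inner_le_of_mem_cone hinc (h x (T x) ▸ BF.inner_self_mem _)
    have h₂ : ‖S (T x)‖ ≤ ‖S.comp T‖ * ‖x‖ := (S.comp T).le_opNorm x
    refine (pow_le_pow_iff_left₀ (_root_.norm_nonneg _) (by positivity) two_ne_zero).1 ?_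
    rw [mul_pow, Real.sq_sqrt (_root_.norm_nonneg _)]
    nlinarith [_root_.norm_nonneg x]
  calc ‖T‖ ^ 2 ≤ √‖S.comp T‖ ^ 2 :=
        pow_le_pow_left₀ (_root_.norm_nonneg _) (T.opNorm_le_bound (Real.sqrt_nonneg _) hpt) 2
    _ = ‖S.comp T‖ := Real.sq_sqrt (_root_.norm_nonneg _)

theorem IsAdjoint.opNorm_le (hinc : D.Increasing (normSeminorm ℂ Z))
    (hE : ∀ x : E, ‖x‖ = BE.norm x) (hF : ∀ y : F, ‖y‖ = BF.norm y)
    {T : E →L[ℂ] F} {S : F →L[ℂ] E} (h : BE.IsAdjoint BF T S) : ‖T‖ ≤ ‖S‖ := by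
  have h₁ := h.sq_opNorm_le_opNorm_comp hinc hE hF
  have h₂ := S.opNorm_comp_le T
  nlinarith [_root_.norm_nonneg T, _root_.norm_nonneg S]

theorem IsAdjoint.opNorm_eq (hinc : D.Increasing (normSeminorm ℂ Z))
    (hE : ∀ x : E, ‖x‖ = BE.norm x) (hF : ∀ y : F, ‖y‖ = BF.norm y)
    {T : E →L[ℂ] F} {S : F →L[ℂ] E} (h : BE.IsAdjoint BF T S) : ‖S‖ = ‖T‖ :=
  le_antisymm (h.symm.opNorm_le hinc hF hE) (h.opNorm_le hinc hE hF)

theorem IsAdjoint.opNorm_comp_eq (hinc : D.Increasing (normSeminorm ℂ Z))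
    (hE : ∀ x : E, ‖x‖ = BE.norm x) (hF : ∀ y : F, ‖y‖ = BF.norm y)
    {T : E →L[ℂ] F} {S : F →L[ℂ] E} (h : BE.IsAdjoint BF T S) : ‖S.comp T‖ = ‖T‖ ^ 2 := by
  refine le_antisymm ?_ (h.sq_opNorm_le_opNorm_comp hinc hE hF)
  calc ‖S.comp T‖ ≤ ‖S‖ * ‖T‖ := S.opNorm_comp_le T
    _ = ‖T‖ ^ 2 := by rw [h.opNorm_eq hinc hE hF, sq]

theorem _root_.vhOpNorm_eq_opNorm (hE : ∀ x : E, ‖x‖ = BE.norm x) (T : E →L[ℂ] E) :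
    vhOpNorm BE T = ‖T‖ := by
  rw [← T.sSup_unitClosedBall_eq_norm]
  simp only [vhOpNorm, Metric.closedBall, dist_zero_right, hE]
  rfl

theorem exists_isAdjoint_tendsto [CompleteSpace E]
    (hinc : D.Increasing (normSeminorm ℂ Z))
    (hE : ∀ x : E, ‖x‖ = BE.norm x) (T : ℕ → E →ₗ[ℂ] E) (hT : ∀ n, BE.Adjointable BE (T n))
    (hcau : ∀ ε : ℝ, 0 < ε → ∃ N : ℕ, ∀ m n : ℕ, N ≤ m → N ≤ n → vhOpNorm BE (T m - T n) ≤ ε) :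
    ∃ L : E →ₗ[ℂ] E, BE.Adjointable BE L ∧
      ∀ ε : ℝ, 0 < ε → ∃ N : ℕ, ∀ n : ℕ, N ≤ n → vhOpNorm BE (T n - L) ≤ ε := by
  choose S hS using hT
  let T' : ℕ → E →L[ℂ] E := fun n => ⟨T n, (hS n).continuous hinc hE hE⟩
  let S' : ℕ → E →L[ℂ] E := fun n => ⟨S n, (hS n).symm.continuous hinc hE hE⟩
  have hT'S' : ∀ n, BE.IsAdjoint BE (T' n) (S' n) := hS
  have hcauT : CauchySeq T' := Metric.cauchySeq_iff.2 fun ε hε => by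
    obtain ⟨N, hN⟩ := hcau (ε / 2) (half_pos hε)
    refine ⟨N, fun m hm n hn => ?_⟩
    rw [dist_eq_norm, ← vhOpNorm_eq_opNorm hE]
    exact (hN m n hm hn).trans_lt (half_lt_self hε)
  have hcauS : CauchySeq S' := Metric.cauchySeq_iff.2 fun ε hε =>
    (Metric.cauchySeq_iff.1 hcauT ε hε).imp fun N hN m hm n hn => by
      rw [dist_eq_norm, IsAdjoint.opNorm_eq (T := T' m - T' n) hinc hE hE
        ((hT'S' m).sub (hT'S' n)), ← dist_eq_norm]
      exact hN m hm n hn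
  obtain ⟨L, hL⟩ := cauchySeq_tendsto_of_complete hcauT
  obtain ⟨M, hM⟩ := cauchySeq_tendsto_of_complete hcauS
  refine ⟨L, ⟨M, IsAdjoint.of_tendsto hinc hE hE hT'S' hL hM⟩, fun ε hε => ?_⟩
  obtain ⟨N, hN⟩ := Metric.tendsto_atTop.1 hL ε hε
  exact ⟨N, fun n hn => (vhOpNorm_eq_opNorm hE (T' n - L)).trans_le
    (by rw [← dist_eq_norm]; exact (hN n hn).le)⟩

end Normed

end Gramian

theorem statement18_general {Z H : Type*} [NormedAddCommGroup Z] [NormedSpace ℂ Z]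
    [AddCommGroup H] [Module ℂ H]
    (D : OrderedStarData Z)
    (hnorm_inc : ∀ x y : Z, x ∈ D.cone → y - x ∈ D.cone → ‖x‖ ≤ ‖y‖)
    (BH : Gramian D H)
    -- `H` is complete in the norm `‖x‖_H = ‖[x,x]‖^{1/2}`
    (hHcomplete : ∀ u : ℕ → H,
      (∀ ε : ℝ, 0 < ε → ∃ N : ℕ, ∀ m n : ℕ, N ≤ m → N ≤ n →
        Real.sqrt ‖BH.inner (u m - u n) (u m - u n)‖ < ε) →
      ∃ x : H, ∀ ε : ℝ, 0 < ε → ∃ N : ℕ, ∀ n : ℕ, N ≤ n →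
        Real.sqrt ‖BH.inner (u n - x) (u n - x)‖ < ε) :
    -- every adjointable operator is bounded
    (∀ T : H →ₗ[ℂ] H, BH.Adjointable BH T → ∃ C : ℝ, 0 ≤ C ∧ ∀ x : H,
      Real.sqrt ‖BH.inner (T x) (T x)‖ ≤ C * Real.sqrt ‖BH.inner x x‖) ∧
    -- `‖T*‖ = ‖T‖`
    (∀ T S : H →ₗ[ℂ] H, BH.IsAdjoint BH T S → vhOpNorm BH S = vhOpNorm BH T) ∧
    -- `‖S ∘ T‖ ≤ ‖S‖ ‖T‖`
    (∀ T S : H →ₗ[ℂ] H, BH.Adjointable BH T → BH.Adjointable BH S →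
      vhOpNorm BH (S ∘ₗ T) ≤ vhOpNorm BH S * vhOpNorm BH T) ∧
    -- the `C*`-identity `‖T* ∘ T‖ = ‖T‖²`
    (∀ T S : H →ₗ[ℂ] H, BH.IsAdjoint BH T S →
      vhOpNorm BH (S ∘ₗ T) = (vhOpNorm BH T) ^ 2) ∧
    -- completeness of `L*(H)` in the operator norm
    (∀ T : ℕ → (H →ₗ[ℂ] H), (∀ n, BH.Adjointable BH (T n)) →
      (∀ ε : ℝ, 0 < ε → ∃ N : ℕ, ∀ m n : ℕ, N ≤ m → N ≤ n →
        vhOpNorm BH (T m - T n) ≤ ε) →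
      ∃ L : H →ₗ[ℂ] H, BH.Adjointable BH L ∧
        ∀ ε : ℝ, 0 < ε → ∃ N : ℕ, ∀ n : ℕ, N ≤ n → vhOpNorm BH (T n - L) ≤ ε) := by
  let _ : NormedAddCommGroup H := (BH.addGroupNorm hnorm_inc).toNormedAddCommGroup
  let _ : NormedSpace ℂ H := ⟨fun c x => (BH.norm_smul c x).le⟩
  have hB : ∀ x : H, ‖x‖ = BH.norm x := fun _ => rfl
  have : CompleteSpace H := completeSpace_of_forall_cauchy_exists_tendsto hHcomplete
  refine ⟨fun T ⟨S, h⟩ => ?_, fun T S h => ?_, fun T S ⟨T', hT⟩ ⟨S', hS⟩ => ?_, fun T S h => ?_,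
    Gramian.exists_isAdjoint_tendsto hnorm_inc hB⟩
  · obtain ⟨T, -, rfl, -⟩ := h.exists_continuousLinearMap hnorm_inc hB hB
    exact ⟨‖T‖, norm_nonneg _, T.le_opNorm⟩
  · obtain ⟨T, S, rfl, rfl⟩ := h.exists_continuousLinearMap hnorm_inc hB hB
    rw [vhOpNorm_eq_opNorm hB, vhOpNorm_eq_opNorm hB]
    exact h.opNorm_eq hnorm_inc hB hB
  · obtain ⟨T, -, rfl, -⟩ := hT.exists_continuousLinearMap hnorm_inc hB hB
    obtain ⟨S, -, rfl, -⟩ := hS.exists_continuousLinearMap hnorm_inc hB hB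
    rw [← ContinuousLinearMap.toLinearMap_comp, vhOpNorm_eq_opNorm hB, vhOpNorm_eq_opNorm hB,
      vhOpNorm_eq_opNorm hB]
    exact S.opNorm_comp_le T
  · obtain ⟨T, S, rfl, rfl⟩ := h.exists_continuousLinearMap hnorm_inc hB hB
    rw [← ContinuousLinearMap.toLinearMap_comp, vhOpNorm_eq_opNorm hB, vhOpNorm_eq_opNorm hB]
    exact h.opNorm_comp_eq hnorm_inc hB hB

/-- For a normed VH-space `H` over a Banach ordered `*`-space `Z`, the
adjointable operators `L*(H)` with the operator norm form a `C*`-algebra: every adjointable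
operator is bounded, `‖T*‖ = ‖T‖`, `‖S ∘ T‖ ≤ ‖S‖ ‖T‖`, `‖T* ∘ T‖ = ‖T‖²`, and `L*(H)` is
complete in the operator norm. -/
theorem statement18 {Z H : Type*} [NormedAddCommGroup Z] [NormedSpace ℂ Z] [CompleteSpace Z]
    [AddCommGroup H] [Module ℂ H]
    (D : OrderedStarData Z)
    (hcone_closed : IsClosed D.cone)
    (hnorm_star : ∀ z : Z, ‖D.star z‖ = ‖z‖)
    (hnorm_inc : ∀ x y : Z, x ∈ D.cone → y - x ∈ D.cone → ‖x‖ ≤ ‖y‖)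
    (BH : Gramian D H)
    -- `H` is complete in the norm `‖x‖_H = ‖[x,x]‖^{1/2}`
    (hHcomplete : ∀ u : ℕ → H,
      (∀ ε : ℝ, 0 < ε → ∃ N : ℕ, ∀ m n : ℕ, N ≤ m → N ≤ n →
        Real.sqrt ‖BH.inner (u m - u n) (u m - u n)‖ < ε) →
      ∃ x : H, ∀ ε : ℝ, 0 < ε → ∃ N : ℕ, ∀ n : ℕ, N ≤ n →
        Real.sqrt ‖BH.inner (u n - x) (u n - x)‖ < ε) :
    -- every adjointable operator is bounded
    (∀ T : H →ₗ[ℂ] H, BH.Adjointable BH T → ∃ C : ℝ, 0 ≤ C ∧ ∀ x : H,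
      Real.sqrt ‖BH.inner (T x) (T x)‖ ≤ C * Real.sqrt ‖BH.inner x x‖) ∧
    -- `‖T*‖ = ‖T‖`
    (∀ T S : H →ₗ[ℂ] H, BH.IsAdjoint BH T S → vhOpNorm BH S = vhOpNorm BH T) ∧
    -- `‖S ∘ T‖ ≤ ‖S‖ ‖T‖`
    (∀ T S : H →ₗ[ℂ] H, BH.Adjointable BH T → BH.Adjointable BH S →
      vhOpNorm BH (S ∘ₗ T) ≤ vhOpNorm BH S * vhOpNorm BH T) ∧
    -- the `C*`-identity `‖T* ∘ T‖ = ‖T‖²`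
    (∀ T S : H →ₗ[ℂ] H, BH.IsAdjoint BH T S →
      vhOpNorm BH (S ∘ₗ T) = (vhOpNorm BH T) ^ 2) ∧
    -- completeness of `L*(H)` in the operator norm
    (∀ T : ℕ → (H →ₗ[ℂ] H), (∀ n, BH.Adjointable BH (T n)) →
      (∀ ε : ℝ, 0 < ε → ∃ N : ℕ, ∀ m n : ℕ, N ≤ m → N ≤ n →
        vhOpNorm BH (T m - T n) ≤ ε) →
      ∃ L : H →ₗ[ℂ] H, BH.Adjointable BH L ∧
        ∀ ε : ℝ, 0 < ε → ∃ N : ℕ, ∀ n : ℕ, N ≤ n → vhOpNorm BH (T n - L) ≤ ε) :=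
  statement18_general D hnorm_inc BH hHcomplete
end
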